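/- arXiv:2604.02758 — 6 statements merged into one kernel-verified Lean document; each statement's English description precedes it below -/
import Mathlib

section
/- inf_{β > 0} [ (1+β) − (β+β²)·ln(1 + 1/β) ] = 1/2, and the infimum is not attained by any β > 0. -/
/-!
With `x = 1 / (2β + 1)` one has `log (1 + 1/β) = 2 ∑ x ^ (2k+1) / (2k+1)`. Bounding this series
below by its first term and strictly above by the geometric series `2 ∑ x ^ (2k+1) = 2x / (1 - x²)`
squeezes the objective: `1/2 < (1 + β) - (β + β²) log (1 + 1/β) ≤ 1/2 + 1/(4β)`. The objective
therefore never reaches `1/2`, but tends to it as `β → ∞`.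
-/

open Real

namespace Real

lemma two_div_le_log_one_add_inv {a : ℝ} (ha : 0 < a) : 2 / (2 * a + 1) ≤ log (1 + a⁻¹) := by
  have := le_hasSum (hasSum_log_one_add_inv ha) 0 fun k _ => by positivity
  norm_num at this
  rwa [div_eq_mul_inv]

lemma log_one_add_inv_lt {a : ℝ} (ha : 0 < a) :
    log (1 + a⁻¹) < (2 * a + 1) / (2 * a * (a + 1)) := by
  set x := 1 / (2 * a + 1) with hx
  have hx0 : 0 < x := by positivity
  have hx2 : x ^ 2 < 1 := by
    rw [hx, div_pow, one_pow, div_lt_one (by positivity)]; nlinarith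
  have geom : HasSum (fun k : ℕ => 2 * x ^ (2 * k + 1)) (2 * x / (1 - x ^ 2)) := by
    have h := (hasSum_geometric_of_lt_one (sq_nonneg x) hx2).mul_left (2 * x)
    have e : (fun k : ℕ => 2 * x * (x ^ 2) ^ k) = fun k => 2 * x ^ (2 * k + 1) :=
      funext fun k => by ring
    rwa [e, ← div_eq_mul_inv] at h
  have termwise (k : ℕ) : 2 * (1 / (2 * k + 1)) * x ^ (2 * k + 1) ≤ 2 * x ^ (2 * k + 1) := by
    have : (0 : ℝ) < x ^ (2 * k + 1) := by positivity
    have : 1 / (2 * k + 1 : ℝ) ≤ 1 := by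
      rw [div_le_one (by positivity)]; linarith [k.cast_nonneg (α := ℝ)]
    nlinarith
  have strict : 2 * (1 / (2 * (1 : ℕ) + 1)) * x ^ (2 * 1 + 1) < 2 * x ^ (2 * 1 + 1) := by
    norm_num; linarith [pow_pos hx0 3]
  calc log (1 + a⁻¹) < 2 * x / (1 - x ^ 2) :=
        hasSum_lt termwise strict (hasSum_log_one_add_inv ha) geom
    _ = _ := by
      have h4 : (2 * a + 1) ^ 2 - 1 = 4 * a * (a + 1) := by ring
      rw [hx, div_pow, one_pow, one_sub_div (by positivity), h4]
      field_simp
      ring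

end Real

/-- The function whose infimum over `β > 0` is `R*(1)`. -/
noncomputable def robustness (β : ℝ) : ℝ := (1 + β) - (β + β ^ 2) * log (1 + 1 / β)

lemma half_lt_robustness {β : ℝ} (hβ : 0 < β) : 1 / 2 < robustness β := by
  have h := mul_lt_mul_of_pos_left (log_one_add_inv_lt hβ) (by positivity : 0 < β + β ^ 2)
  have e : (β + β ^ 2) * ((2 * β + 1) / (2 * β * (β + 1))) = β + 1 / 2 := by
    field_simp; ring
  rw [robustness, one_div β]
  linarith

lemma robustness_le {β : ℝ} (hβ : 0 < β) : robustness β ≤ 1 / 2 + 1 / (4 * β) := by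
  have h := mul_le_mul_of_nonneg_left (two_div_le_log_one_add_inv hβ)
    (by positivity : 0 ≤ β + β ^ 2)
  have e : 1 + β - (β + β ^ 2) * (2 / (2 * β + 1)) = 1 / 2 + 1 / (2 * (2 * β + 1)) := by
    field_simp; ring
  have h4 : 1 / (2 * (2 * β + 1)) ≤ 1 / (4 * β) :=
    one_div_le_one_div_of_le (by positivity) (by linarith)
  rw [robustness, one_div β]
  linarith

theorem Rstar_one_eq_half :
    IsGLB ((fun β : ℝ => (1 + β) - (β + β ^ 2) * Real.log (1 + 1 / β)) '' Set.Ioi 0)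
      (1 / 2) ∧
    ∀ β : ℝ, 0 < β →
      (1 + β) - (β + β ^ 2) * Real.log (1 + 1 / β) ≠ 1 / 2 := by
  refine ⟨⟨?_, fun b hb => ?_⟩, fun β hβ => (half_lt_robustness hβ).ne'⟩
  · rintro _ ⟨β, hβ, rfl⟩
    exact (half_lt_robustness hβ).le
  · refine le_of_forall_pos_le_add fun ε hε => ?_
    have hβ : 0 < 1 / (4 * ε) := by positivity
    calc b ≤ robustness (1 / (4 * ε)) := hb ⟨_, hβ, rfl⟩
      _ ≤ 1 / 2 + 1 / (4 * (1 / (4 * ε))) := robustness_le hβ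
      _ = 1 / 2 + ε := by field_simp
end

section
/- For every C ∈ (0,1], R*(C) := inf_{β>0} [(1+β) − C(β+β²)·ln(1 + 1/β)] satisfies R*(C) > 1 − C. -/
/-!
For `y ≥ 1` we have `log y ≤ sinh (log y) = (y - y⁻¹) / 2`. At `y = 1 + 1/β` this says
`(β + β²) log (1 + 1/β) ≤ β + 1/2`, so every value of the objective is at least
`1 - C/2 + (1 - C) β ≥ 1 - C/2`, a uniform bound strictly above `1 - C`.
-/

open Real

theorem Real.log_le_half_sub_inv {y : ℝ} (hy : 1 ≤ y) : log y ≤ (y - y⁻¹) / 2 := by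
  rw [← sinh_log (by linarith)]
  exact self_le_sinh_iff.mpr (log_nonneg hy)

theorem Real.mul_log_one_add_one_div_le {β : ℝ} (hβ : 0 < β) :
    (β + β ^ 2) * log (1 + 1 / β) ≤ β + 1 / 2 :=
  calc (β + β ^ 2) * log (1 + 1 / β)
      ≤ (β + β ^ 2) * ((1 + 1 / β - (1 + 1 / β)⁻¹) / 2) := by
        gcongr
        exact log_le_half_sub_inv (by simp [hβ.le])
    _ = β + 1 / 2 := by field_simp; ring

theorem one_sub_half_le_objective {C β : ℝ} (hC0 : 0 ≤ C) (hC1 : C ≤ 1) (hβ : 0 < β) :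
    1 - C / 2 ≤ (1 + β) - C * (β + β ^ 2) * log (1 + 1 / β) := by
  have hlog := mul_le_mul_of_nonneg_left (mul_log_one_add_one_div_le hβ) hC0
  linarith [mul_nonneg (sub_nonneg.mpr hC1) hβ.le]

theorem Rstar_beats_public (C : ℝ) (hC : C ∈ Set.Ioc (0 : ℝ) 1) :
    sInf ((fun β : ℝ => (1 + β) - C * (β + β ^ 2) * Real.log (1 + 1 / β)) '' Set.Ioi 0)
      > 1 - C := by
  obtain ⟨hC0, hC1⟩ := hC
  have hbound : 1 - C / 2 ≤
      sInf ((fun β : ℝ => (1 + β) - C * (β + β ^ 2) * Real.log (1 + 1 / β)) '' Set.Ioi 0) := by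
    refine le_csInf ⟨_, Set.mem_image_of_mem _ (Set.mem_Ioi.mpr one_pos)⟩ ?_
    rintro _ ⟨β, hβ, rfl⟩
    exact one_sub_half_le_objective hC0.le hC1 hβ
  linarith
end

section
/- There exists C ∈ (1/2, 1) such that R*(C) = C, where R*(C) = inf_{β>0} [(1+β) − C(β+β²)·ln(1+1/β)]. -/
/-!
Write `w β = (β + β²) log (1 + 1/β)` (`logWeight`), so that `0 ≤ w β ≤ 1 + β` and `R* C` is the
infimum over `β > 0` of the affine functions `C ↦ (1 + β) - C w β`. For `C ∈ [0, 1]` these are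
bounded below by `(1 - C)(1 + β) ≥ 0`, so `R*` is a finite concave, hence continuous, function
on `(0, 1)`. At `C = 3/5` the bound `w β ≤ 1 + β` handles `β ≥ 1/2`, and `log x ≤ x / e` gives
`w β ≤ (1 + β)² / e`, which handles small `β`; so `R*(3/5) ≥ 3/5`. The choice `β = 1` gives
`R*(9/10) ≤ 2 - (9/5) log 2 < 9/10`, and the intermediate value theorem yields the fixed point.
-/

noncomputable def Rstar (C : ℝ) : ℝ :=
  sInf ((fun β : ℝ => (1 + β) - C * (β + β ^ 2) * Real.log (1 + 1 / β)) '' Set.Ioi 0)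

open Real Set

lemma Real.log_le_div_exp_one {x : ℝ} (hx : 0 < x) : log x ≤ x / exp 1 := by
  have h := log_le_sub_one_of_pos (x := x / exp 1) (by positivity)
  rw [log_div hx.ne' (exp_pos 1).ne', log_exp] at h
  linarith

theorem ConcaveOn.sInf_image {ι E : Type*} [AddCommMonoid E] [Module ℝ E] {K : Set E}
    {s : Set ι} {f : ι → E → ℝ} (hK : Convex ℝ K) (hs : s.Nonempty)
    (hf : ∀ i ∈ s, ConcaveOn ℝ K (f i)) (hbdd : ∀ x ∈ K, BddBelow ((f · x) '' s)) :
    ConcaveOn ℝ K fun x => sInf ((f · x) '' s) := by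
  refine ⟨hK, fun x hx y hy a b ha hb hab => le_csInf (hs.image _) ?_⟩
  rintro _ ⟨i, hi, rfl⟩
  calc a • sInf ((f · x) '' s) + b • sInf ((f · y) '' s) ≤ a • f i x + b • f i y := by
        gcongr
        · exact csInf_le (hbdd x hx) ⟨i, hi, rfl⟩
        · exact csInf_le (hbdd y hy) ⟨i, hi, rfl⟩
    _ ≤ f i (a • x + b • y) := (hf i hi).2 hx hy ha hb hab

noncomputable def logWeight (β : ℝ) : ℝ := (β + β ^ 2) * log (1 + 1 / β)

noncomputable def rstarObjective (C β : ℝ) : ℝ :=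
  (1 + β) - C * (β + β ^ 2) * log (1 + 1 / β)

lemma Rstar_eq_sInf (C : ℝ) : Rstar C = sInf (rstarObjective C '' Ioi 0) := rfl

lemma rstarObjective_eq (C β : ℝ) : rstarObjective C β = 1 + β - C * logWeight β := by
  unfold rstarObjective logWeight; ring

section logWeight

variable {β : ℝ}

lemma logWeight_le_of_log_le (hβ : 0 < β) {y : ℝ} (hy : log (1 + 1 / β) ≤ y) :
    logWeight β ≤ (β + β ^ 2) * y :=
  mul_le_mul_of_nonneg_left hy (by positivity)

lemma logWeight_nonneg (hβ : 0 < β) : 0 ≤ logWeight β :=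
  mul_nonneg (by positivity) (log_nonneg (by simp [hβ.le]))

lemma logWeight_le_one_add (hβ : 0 < β) : logWeight β ≤ 1 + β := by
  have h := logWeight_le_of_log_le hβ (log_le_sub_one_of_pos (by positivity : 0 < 1 + 1 / β))
  calc logWeight β ≤ (β + β ^ 2) * (1 + 1 / β - 1) := h
    _ = 1 + β := by field_simp; ring

lemma logWeight_le_sq_div_exp_one (hβ : 0 < β) : logWeight β ≤ (1 + β) ^ 2 / exp 1 := by
  have h := logWeight_le_of_log_le hβ (log_le_div_exp_one (by positivity : 0 < 1 + 1 / β))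
  calc logWeight β ≤ (β + β ^ 2) * ((1 + 1 / β) / exp 1) := h
    _ = (1 + β) ^ 2 / exp 1 := by field_simp; ring

end logWeight

lemma one_sub_mul_le_rstarObjective {C β : ℝ} (hC : 0 ≤ C) (hβ : 0 < β) :
    (1 - C) * (1 + β) ≤ rstarObjective C β := by
  rw [rstarObjective_eq]
  nlinarith [mul_le_mul_of_nonneg_left (logWeight_le_one_add hβ) hC]

lemma bddBelow_rstarObjective_image {C : ℝ} (hC : C ∈ Icc (0 : ℝ) 1) :
    BddBelow (rstarObjective C '' Ioi 0) := by
  refine ⟨0, ?_⟩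
  rintro _ ⟨β, hβ, rfl⟩
  exact (mul_nonneg (sub_nonneg.2 hC.2) (by linarith [mem_Ioi.1 hβ])).trans
    (one_sub_mul_le_rstarObjective hC.1 hβ)

lemma Rstar_le_rstarObjective {C β : ℝ} (hC : C ∈ Icc (0 : ℝ) 1) (hβ : 0 < β) :
    Rstar C ≤ rstarObjective C β :=
  csInf_le (bddBelow_rstarObjective_image hC) ⟨β, hβ, rfl⟩

lemma le_Rstar {C a : ℝ} (h : ∀ β, 0 < β → a ≤ rstarObjective C β) : a ≤ Rstar C :=
  le_csInf (nonempty_Ioi.image _) (by rintro _ ⟨β, hβ, rfl⟩; exact h β hβ)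

lemma concaveOn_rstarObjective (β : ℝ) : ConcaveOn ℝ univ (rstarObjective · β) := by
  refine ⟨convex_univ, fun x _ y _ a b _ _ hab => le_of_eq ?_⟩
  simp only [rstarObjective_eq, smul_eq_mul]
  linear_combination (1 + β) * hab

lemma concaveOn_Rstar : ConcaveOn ℝ (Icc 0 1) Rstar :=
  ConcaveOn.sInf_image (convex_Icc 0 1) nonempty_Ioi
    (fun β _ => (concaveOn_rstarObjective β).subset (subset_univ _) (convex_Icc 0 1))
    (fun _ hC => bddBelow_rstarObjective_image hC)

lemma continuousOn_Rstar : ContinuousOn Rstar (Ioo 0 1) := by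
  simpa using concaveOn_Rstar.continuousOn_interior

lemma three_fifths_le_Rstar : (3 / 5 : ℝ) ≤ Rstar (3 / 5) := by
  refine le_Rstar fun β hβ => ?_
  rcases le_or_gt (1 / 2) β with hβ_large | hβ_small
  · nlinarith [one_sub_mul_le_rstarObjective (C := 3 / 5) (by norm_num) hβ]
  · have he : (27 / 10 : ℝ) ≤ exp 1 := by linarith [exp_one_gt_d9]
    have hw : logWeight β ≤ (10 / 27) * (1 + β) ^ 2 := by
      calc logWeight β ≤ (1 + β) ^ 2 / exp 1 := logWeight_le_sq_div_exp_one hβ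
        _ ≤ (1 + β) ^ 2 / (27 / 10) := by gcongr
        _ = (10 / 27) * (1 + β) ^ 2 := by ring
    rw [rstarObjective_eq]
    nlinarith

lemma Rstar_nine_tenths_le : Rstar (9 / 10) ≤ 9 / 10 := by
  have h := Rstar_le_rstarObjective (C := 9 / 10) (β := 1) (by norm_num) one_pos
  have h1 : rstarObjective (9 / 10) 1 = 2 - 9 / 5 * log 2 := by
    unfold rstarObjective; norm_num
  linarith [log_two_gt_d9]

theorem Rstar_fixed_point :
    ∃ C : ℝ, C ∈ Set.Ioo (1 / 2 : ℝ) 1 ∧ Rstar C = C := by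
  have hsub : Icc (3 / 5 : ℝ) (9 / 10) ⊆ Ioo 0 1 := Icc_subset_Ioo (by norm_num) (by norm_num)
  have hcont : ContinuousOn (fun C => Rstar C - C) (Icc (3 / 5 : ℝ) (9 / 10)) :=
    (continuousOn_Rstar.mono hsub).sub continuousOn_id
  have hzero : (0 : ℝ) ∈ Icc (Rstar (9 / 10) - 9 / 10) (Rstar (3 / 5) - 3 / 5) :=
    ⟨by linarith [Rstar_nine_tenths_le], by linarith [three_fifths_le_Rstar]⟩
  obtain ⟨C, hC, hfix⟩ := intermediate_value_Icc' (by norm_num) hcont hzero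
  exact ⟨C, ⟨by linarith [hC.1], by linarith [hC.2]⟩, sub_eq_zero.1 hfix⟩
end

section
/- For all T > 0, β > 0, C ∈ [0,1], and v_L ≥ T, the quantity (1−C)·β·[T + ∫_T^{v_L} (T/v) dv + ∫_{v_L}^{v_L+T/β} (T − β(v − v_L))/v dv] + ∫_T^{v_L} (T/v²)(T + β(v_L − v)) dv + ∫_{v_L}^{v_L+T/β} ((T + βv_L)/v²)(T − β(v − v_L)) dv equals T + βv_L − Cβ·[T·ln(v_L/T) + (T + βv_L)·ln(1 + T/(βv_L))]. -/
/-! Every integrand is of the form `c / v + d / v ^ 2 + e` on an interval of positive reals,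
so each integral is `c * log (b / a) + d * (1 / a - 1 / b) + e * (b - a)`; what remains is
field arithmetic, with `(vL + T / β) / vL = 1 + T / (β * vL)` matching the two logarithms. -/

open intervalIntegral Real Set
open scoped Interval

theorem zero_notMem_uIcc_of_pos {a b : ℝ} (ha : 0 < a) (hb : 0 < b) : (0 : ℝ) ∉ [[a, b]] :=
  fun h => (lt_min ha hb).not_ge h.1

theorem integral_div_add_div_sq_add_const {a b : ℝ} (c d e : ℝ) (h0 : (0 : ℝ) ∉ [[a, b]]) :
    ∫ v in a..b, (c / v + d / v ^ 2 + e) =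
      c * log (b / a) + d * (1 / a - 1 / b) + e * (b - a) := by
  have hne : ∀ x ∈ [[a, b]], x ≠ 0 := fun x hx hx0 => h0 (hx0 ▸ hx)
  have hc : IntervalIntegrable (fun v => c / v) MeasureTheory.volume a b :=
    (continuousOn_const.div continuousOn_id hne).intervalIntegrable
  have hd : IntervalIntegrable (fun v => d / v ^ 2) MeasureTheory.volume a b :=
    (continuousOn_const.div (continuousOn_id.pow 2)
      fun x hx => pow_ne_zero 2 (hne x hx)).intervalIntegrable
  have hc_eval : ∫ v in a..b, c / v = c * log (b / a) := by
    simp only [div_eq_mul_one_div c]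
    rw [integral_const_mul, integral_one_div h0]
  have hd_eval : ∫ v in a..b, d / v ^ 2 = d * (1 / a - 1 / b) := by
    have hzpow : ∀ v : ℝ, d / v ^ 2 = d * v ^ (-2 : ℤ) := fun v => by
      rw [zpow_neg, zpow_ofNat, div_eq_mul_inv]
    simp only [hzpow]
    rw [integral_const_mul, integral_zpow (Or.inr ⟨by norm_num, h0⟩)]
    congr 1
    norm_num
    ring
  rw [integral_add (hc.add hd) intervalIntegrable_const, integral_add hc hd, hc_eval, hd_eval,
    integral_const, smul_eq_mul]
  ring

theorem integral_eq_of_eq_div_add_div_sq_add_const {f : ℝ → ℝ} {a b : ℝ} (c d e : ℝ)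
    (h0 : (0 : ℝ) ∉ [[a, b]]) (hf : ∀ v ≠ 0, f v = c / v + d / v ^ 2 + e) :
    ∫ v in a..b, f v = c * log (b / a) + d * (1 / a - 1 / b) + e * (b - a) := by
  rw [← integral_div_add_div_sq_add_const c d e h0]
  exact integral_congr fun v hv => hf v fun hv0 => h0 (hv0 ▸ hv)

theorem dual_objective_evaluation_general (T β C vL : ℝ) (hT : 0 < T) (hβ : 0 < β)
    (hvL : T ≤ vL) :
    (1 - C) * β *
        (T + (∫ v in T..vL, T / v) +
          ∫ v in vL..(vL + T / β), (T - β * (v - vL)) / v) +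
      (∫ v in T..vL, (T / v ^ 2) * (T + β * (vL - v))) +
      (∫ v in vL..(vL + T / β), ((T + β * vL) / v ^ 2) * (T - β * (v - vL)))
    = T + β * vL -
        C * β * (T * Real.log (vL / T) + (T + β * vL) * Real.log (1 + T / (β * vL))) := by
  have hvL0 : 0 < vL := hT.trans_le hvL
  have hvR0 : 0 < vL + T / β := by positivity
  have h₁ := zero_notMem_uIcc_of_pos hT hvL0
  have h₂ := zero_notMem_uIcc_of_pos hvL0 hvR0
  rw [integral_eq_of_eq_div_add_div_sq_add_const T 0 0 h₁ fun v _ => by ring,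
    integral_eq_of_eq_div_add_div_sq_add_const (T + β * vL) 0 (-β) h₂
      fun v hv => by field_simp; ring,
    integral_eq_of_eq_div_add_div_sq_add_const (-(T * β)) (T * (T + β * vL)) 0 h₁
      fun v hv => by field_simp; ring,
    integral_eq_of_eq_div_add_div_sq_add_const (-(β * (T + β * vL))) ((T + β * vL) ^ 2) 0 h₂
      fun v hv => by field_simp; ring]
  have hlog : (vL + T / β) / vL = 1 + T / (β * vL) := by field_simp
  rw [hlog]
  field_simp
  ring

theorem dual_objective_evaluation (T β C vL : ℝ) (hT : 0 < T) (hβ : 0 < β)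
    (hC : C ∈ Set.Icc (0 : ℝ) 1) (hvL : T ≤ vL) :
    (1 - C) * β *
        (T + (∫ v in T..vL, T / v) +
          ∫ v in vL..(vL + T / β), (T - β * (v - vL)) / v) +
      (∫ v in T..vL, (T / v ^ 2) * (T + β * (vL - v))) +
      (∫ v in vL..(vL + T / β), ((T + β * vL) / v ^ 2) * (T - β * (v - vL)))
    = T + β * vL -
        C * β * (T * Real.log (vL / T) + (T + β * vL) * Real.log (1 + T / (β * vL))) :=
  dual_objective_evaluation_general T β C vL hT hβ hvL
end

section
/- For fixed T > 0, β > 0, C ∈ (0,1], the function h(v_L) = T + βv_L − Cβ·[T·ln(v_L/T) + (T + βv_L)·ln(1 + T/(βv_L))] is convex on (0,∞), and its restriction to [T, ∞) attains its minimum at v_L = T, where h(T) = T(1+β) − C·T(β+β²)·ln(1 + 1/β). -/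
/-!
Up to the constant term, the bracket is `(T + βv) log (T + βv) - βv log (βv)`, whose derivative
is `β log (1 + T / (βv))`. Hence `h' v = β - Cβ² log (1 + T / (βv))` increases with `v`, which
gives convexity, and `log (1 + x) ≤ x` gives `h' T ≥ β (1 - C) ≥ 0`, so `h` is monotone on `[T, ∞)`.
-/

open Real Set

noncomputable def dualObjective (T β C v : ℝ) : ℝ :=
  T + β * v - C * β * (T * log (v / T) + (T + β * v) * log (1 + T / (β * v)))

lemma antitoneOn_log_one_add_div {a : ℝ} (ha : 0 ≤ a) :
    AntitoneOn (fun v => log (1 + a / v)) (Ioi 0) := by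
  intro v hv w hw hvw
  have hw : 0 < w := hw
  exact log_le_log (by positivity) (by gcongr)

section

variable {T β C : ℝ}

lemma hasDerivAt_dualObjective (hT : 0 < T) (hβ : 0 < β) {v : ℝ} (hv : 0 < v) :
    HasDerivAt (dualObjective T β C) (β - C * β ^ 2 * log (1 + T / (β * v))) v := by
  have hlin : HasDerivAt (fun v => β * v) β v := by simpa using (hasDerivAt_id v).const_mul β
  have hquot : HasDerivAt (fun v => v / T) (1 / T) v := (hasDerivAt_id v).div_const T
  have hinner : HasDerivAt (fun v => 1 + T / (β * v)) (-(T * β) / (β * v) ^ 2) v :=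
    ((hasDerivAt_const v T).div hlin (by positivity)).const_add 1 |>.congr_deriv (by ring)
  refine ((hlin.const_add T).sub ((((hquot.log (by positivity)).const_mul T).add
    ((hlin.const_add T).mul (hinner.log (by positivity)))).const_mul (C * β))).congr_deriv ?_
  field_simp
  ring

lemma deriv_dualObjective (hT : 0 < T) (hβ : 0 < β) {v : ℝ} (hv : 0 < v) :
    deriv (dualObjective T β C) v = β - C * β ^ 2 * log (1 + T / (β * v)) :=
  (hasDerivAt_dualObjective hT hβ hv).deriv

lemma monotoneOn_deriv_dualObjective (hT : 0 < T) (hβ : 0 < β) (hC : 0 ≤ C) :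
    MonotoneOn (deriv (dualObjective T β C)) (Ioi 0) := by
  intro v hv w hw hvw
  rw [deriv_dualObjective hT hβ hv, deriv_dualObjective hT hβ hw, ← div_div, ← div_div]
  have := antitoneOn_log_one_add_div (div_pos hT hβ).le hv hw hvw
  gcongr

lemma convexOn_dualObjective (hT : 0 < T) (hβ : 0 < β) (hC : 0 ≤ C) :
    ConvexOn ℝ (Ioi 0) (dualObjective T β C) := by
  have hdiff : DifferentiableOn ℝ (dualObjective T β C) (Ioi 0) := fun _ hv =>
    (hasDerivAt_dualObjective hT hβ hv).differentiableAt.differentiableWithinAt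
  refine MonotoneOn.convexOn_of_deriv (convex_Ioi 0) hdiff.continuousOn ?_ ?_ <;>
    rw [interior_Ioi]
  exacts [hdiff, monotoneOn_deriv_dualObjective hT hβ hC]

lemma deriv_dualObjective_self_nonneg (hT : 0 < T) (hβ : 0 < β) (hC : C ∈ Icc 0 1) :
    0 ≤ deriv (dualObjective T β C) T := by
  obtain ⟨hC0, hC1⟩ := hC
  have hlog : log (1 + 1 / β) ≤ 1 / β := by
    linarith [log_le_sub_one_of_pos (show 0 < 1 + 1 / β by positivity)]
  have hT' : T / (β * T) = 1 / β := by field_simp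
  calc 0 ≤ β * (1 - C) := by nlinarith
    _ = β - C * β ^ 2 * (1 / β) := by field_simp
    _ ≤ β - C * β ^ 2 * log (1 + 1 / β) := by gcongr
    _ = deriv (dualObjective T β C) T := by rw [deriv_dualObjective hT hβ hT, hT']

lemma monotoneOn_dualObjective (hT : 0 < T) (hβ : 0 < β) (hC : C ∈ Icc 0 1) :
    MonotoneOn (dualObjective T β C) (Ici T) := by
  have hpos : Ici T ⊆ Ioi 0 := Ici_subset_Ioi.mpr hT
  refine monotoneOn_of_hasDerivWithinAt_nonneg (convex_Ici T)
    (fun v hv => (hasDerivAt_dualObjective hT hβ (hpos hv)).continuousAt.continuousWithinAt)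
    (fun v hv => (hasDerivAt_dualObjective hT hβ (hpos (interior_subset hv))).hasDerivWithinAt)
    fun v hv => ?_
  rw [interior_Ici] at hv
  have hv0 : 0 < v := hT.trans hv
  calc 0 ≤ deriv (dualObjective T β C) T := deriv_dualObjective_self_nonneg hT hβ hC
    _ ≤ deriv (dualObjective T β C) v :=
      monotoneOn_deriv_dualObjective hT hβ hC.1 hT hv0 (le_of_lt hv)
    _ = _ := deriv_dualObjective hT hβ hv0

lemma dualObjective_self (hT : T ≠ 0) :
    dualObjective T β C T = T * (1 + β) - C * T * (β + β ^ 2) * log (1 + 1 / β) := by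
  have hT' : T / (β * T) = 1 / β := by rw [mul_comm, ← div_div, div_self hT]
  rw [dualObjective, div_self hT, hT', log_one]
  ring

end

theorem dual_objective_convex_min (T β C : ℝ) (hT : 0 < T) (hβ : 0 < β)
    (hC : C ∈ Set.Ioc (0 : ℝ) 1) :
    let h : ℝ → ℝ := fun vL =>
      T + β * vL -
        C * β * (T * Real.log (vL / T) + (T + β * vL) * Real.log (1 + T / (β * vL)))
    ConvexOn ℝ (Set.Ioi (0 : ℝ)) h ∧
    (∀ vL : ℝ, T ≤ vL → h T ≤ h vL) ∧
    h T = T * (1 + β) - C * T * (β + β ^ 2) * Real.log (1 + 1 / β) := by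
  have hC' : C ∈ Icc 0 1 := Ioc_subset_Icc_self hC
  exact ⟨convexOn_dualObjective hT hβ hC'.1,
    fun _ hv => monotoneOn_dualObjective hT hβ hC' self_mem_Ici hv hv,
    dualObjective_self hT.ne'⟩
end

section
/- Let g: [0,1] → ℝ≥0 be nonincreasing, define r(q) = q·g(q), and suppose q* ∈ (0,1] satisfies r(q*) = sup_{q∈[0,1]} r(q) =: M. Define r⁺(q) = sup_{t ∈ [0,q]} r(t). Then ∫_0^1 r⁺(q) dq ≥ (1 − q*/2)·M ≥ M/2. -/
/-!
Write `M = r q*`. Since `g` is nonincreasing, `r q = q g(q) ≥ q g(q*)` for `q ≤ q*`, so the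
running maximum `r⁺` lies above the ramp `q ↦ q g(q*)` on `[0, q*]` and above `M = q* g(q*)` on
`[q*, 1]`. Integrating this lower bound gives `(q*/2) M + (1 - q*) M = (1 - q*/2) M`, and
`M ≥ r 0 = 0`.
-/

open Set MeasureTheory

section RunningSup

variable {r : ℝ → ℝ} {a b : ℝ}

lemma le_csSup_image_Icc (hbdd : BddAbove (r '' Icc a b)) {t q : ℝ} (ht : t ∈ Icc a q)
    (hq : q ≤ b) : r t ≤ sSup (r '' Icc a q) :=
  le_csSup (hbdd.mono (image_mono (Icc_subset_Icc_right hq))) (mem_image_of_mem r ht)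

lemma monotoneOn_csSup_image_Icc (hbdd : BddAbove (r '' Icc a b)) :
    MonotoneOn (fun q ↦ sSup (r '' Icc a q)) (Icc a b) := fun _ hp _ hq hpq ↦
  csSup_le_csSup (hbdd.mono (image_mono (Icc_subset_Icc_right hq.2)))
    ((nonempty_Icc.2 hp.1).image r) (image_mono (Icc_subset_Icc_right hpq))

end RunningSup

lemma mul_le_intervalIntegral_of_ramp_le {f : ℝ → ℝ} {a c : ℝ} (ha : a ∈ Icc (0 : ℝ) 1)
    (hf : IntervalIntegrable f volume 0 1)
    (h_ramp : ∀ q ∈ Icc 0 a, c * q ≤ f q) (h_flat : ∀ q ∈ Icc a 1, c * a ≤ f q) :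
    (1 - a / 2) * (c * a) ≤ ∫ q in (0 : ℝ)..1, f q := by
  have hf₁ : IntervalIntegrable f volume 0 a :=
    hf.mono_set (by rw [uIcc_of_le ha.1, uIcc_of_le zero_le_one]; exact Icc_subset_Icc_right ha.2)
  have hf₂ : IntervalIntegrable f volume a 1 :=
    hf.mono_set (by rw [uIcc_of_le ha.2, uIcc_of_le zero_le_one]; exact Icc_subset_Icc_left ha.1)
  have h_left : ∫ q in (0 : ℝ)..a, c * q ≤ ∫ q in (0 : ℝ)..a, f q :=
    intervalIntegral.integral_mono_on ha.1 ((continuous_const_mul c).intervalIntegrable _ _) hf₁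
      h_ramp
  have h_right : ∫ _ in a..(1 : ℝ), c * a ≤ ∫ q in a..(1 : ℝ), f q :=
    intervalIntegral.integral_mono_on ha.2 intervalIntegrable_const hf₂ h_flat
  rw [intervalIntegral.integral_const_mul, integral_id] at h_left
  rw [intervalIntegral.integral_const, smul_eq_mul] at h_right
  rw [← intervalIntegral.integral_add_adjacent_intervals hf₁ hf₂]
  linarith

theorem sample_price_half_approx_general (g : ℝ → ℝ) (hg : AntitoneOn g (Set.Icc 0 1))
    (r : ℝ → ℝ) (hr : ∀ q, r q = q * g q)
    (qs : ℝ) (hqs : qs ∈ Set.Ioc (0 : ℝ) 1)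
    (hmax : ∀ q ∈ Set.Icc (0 : ℝ) 1, r q ≤ r qs)
    (rplus : ℝ → ℝ) (hrplus : ∀ q, rplus q = sSup (r '' Set.Icc 0 q)) :
    (∫ q in (0 : ℝ)..1, rplus q) ≥ (1 - qs / 2) * r qs ∧
    (∫ q in (0 : ℝ)..1, rplus q) ≥ r qs / 2 := by
  have hzero : (0 : ℝ) ∈ Icc 0 1 := left_mem_Icc.2 zero_le_one
  have hone : (1 : ℝ) ∈ Icc 0 1 := right_mem_Icc.2 zero_le_one
  have hqs' : qs ∈ Icc (0 : ℝ) 1 := Ioc_subset_Icc_self hqs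
  have hbdd : BddAbove (r '' Icc 0 1) := ⟨r qs, forall_mem_image.2 hmax⟩
  have hrplus_mono : MonotoneOn rplus (Icc 0 1) := by
    simpa only [← hrplus] using monotoneOn_csSup_image_Icc hbdd
  have h_ramp : ∀ q ∈ Icc 0 qs, g qs * q ≤ rplus q := fun q hq ↦ by
    have hq' : q ∈ Icc (0 : ℝ) 1 := ⟨hq.1, hq.2.trans hqs'.2⟩
    calc g qs * q ≤ r q := by
          rw [hr, mul_comm]
          exact mul_le_mul_of_nonneg_left (hg hq' hqs' hq.2) hq.1
      _ ≤ rplus q := hrplus q ▸ le_csSup_image_Icc hbdd (right_mem_Icc.2 hq.1) hq'.2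
  have h_flat : ∀ q ∈ Icc qs 1, g qs * qs ≤ rplus q := fun q hq ↦ by
    rw [mul_comm, ← hr, hrplus]
    exact le_csSup_image_Icc hbdd ⟨hqs'.1, hq.1⟩ hq.2
  have h_int := mul_le_intervalIntegral_of_ramp_le hqs'
    (hrplus_mono.mono (uIcc_subset_Icc hzero hone)).intervalIntegrable h_ramp h_flat
  rw [mul_comm (g qs), ← hr] at h_int
  have hM : 0 ≤ r qs := by simpa [hr] using hmax 0 hzero
  exact ⟨h_int, by nlinarith [hqs'.2]⟩

theorem sample_price_half_approx (g : ℝ → ℝ) (hg : AntitoneOn g (Set.Icc 0 1))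
    (hg0 : ∀ q ∈ Set.Icc (0 : ℝ) 1, 0 ≤ g q)
    (r : ℝ → ℝ) (hr : ∀ q, r q = q * g q)
    (qs : ℝ) (hqs : qs ∈ Set.Ioc (0 : ℝ) 1)
    (hmax : ∀ q ∈ Set.Icc (0 : ℝ) 1, r q ≤ r qs)
    (rplus : ℝ → ℝ) (hrplus : ∀ q, rplus q = sSup (r '' Set.Icc 0 q)) :
    (∫ q in (0 : ℝ)..1, rplus q) ≥ (1 - qs / 2) * r qs ∧
    (∫ q in (0 : ℝ)..1, rplus q) ≥ r qs / 2 :=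
  sample_price_half_approx_general g hg r hr qs hqs hmax rplus hrplus
end
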